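/- Let P and Q be random d×M real matrices on a probability space such that all entries of P Pᵀ, P Qᵀ and Q Qᵀ are integrable, and suppose E[Q Qᵀ] is invertible. Then E[P Qᵀ] (E[Q Qᵀ])⁻¹ E[Q Pᵀ] ⪯ E[P Pᵀ] in the Loewner order. -/

import Mathlib

open MeasureTheory Matrix

/-- Entrywise expectation of a random matrix. -/
noncomputable def matExp {Ω : Type*} [MeasurableSpace Ω] (μ : Measure Ω)
    {m n : Type*} (f : Ω → Matrix m n ℝ) : Matrix m n ℝ :=
  Matrix.of fun i j => ∫ ω, f ω i j ∂μ

/-!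
Stack the two random matrices into `X = [P; Q]`. Then `E[X Xᵀ]` is the block matrix
`[[E[PPᵀ], E[PQᵀ]], [E[QPᵀ], E[QQᵀ]]]`, which is positive semidefinite as an average of the
positive semidefinite matrices `X Xᵀ`. Its lower right block `E[QQᵀ]` is positive semidefinite and
invertible, hence positive definite, so positive semidefiniteness of the block matrix is equivalent
to that of the Schur complement `E[PPᵀ] - E[PQᵀ] E[QQᵀ]⁻¹ E[QPᵀ]`.
-/

section MatExp

variable {Ω : Type*} [MeasurableSpace Ω] {μ : Measure Ω}

theorem matExp_transpose {m n : Type*} (f : Ω → Matrix m n ℝ) :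
    (matExp μ f)ᵀ = matExp μ fun ω => (f ω)ᵀ :=
  rfl

theorem matExp_fromBlocks {m₁ m₂ n₁ n₂ : Type*} (A : Ω → Matrix m₁ n₁ ℝ) (B : Ω → Matrix m₁ n₂ ℝ)
    (C : Ω → Matrix m₂ n₁ ℝ) (D : Ω → Matrix m₂ n₂ ℝ) :
    (matExp μ fun ω => Matrix.fromBlocks (A ω) (B ω) (C ω) (D ω)) =
      Matrix.fromBlocks (matExp μ A) (matExp μ B) (matExp μ C) (matExp μ D) := by
  ext (i | i) (j | j) <;> rfl

variable {n : Type*} [Fintype n]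

theorem integral_dotProduct_mulVec_eq_matExp {f : Ω → Matrix n n ℝ}
    (hf : ∀ i j, Integrable (fun ω => f ω i j) μ) (x : n → ℝ) :
    ∫ ω, x ⬝ᵥ f ω *ᵥ x ∂μ = x ⬝ᵥ matExp μ f *ᵥ x := by
  have hrow : ∀ i, Integrable (fun ω => ∑ j, f ω i j * x j) μ := fun i =>
    integrable_finsetSum _ fun j _ => (hf i j).mul_const _
  simp only [dotProduct, mulVec, matExp, of_apply]
  rw [integral_finsetSum _ fun i _ => (hrow i).const_mul _]
  refine Finset.sum_congr rfl fun i _ => ?_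
  rw [integral_const_mul, integral_finsetSum _ fun j _ => (hf i j).mul_const _]
  simp only [integral_mul_const]

theorem posSemidef_matExp {f : Ω → Matrix n n ℝ} (hf : ∀ i j, Integrable (fun ω => f ω i j) μ)
    (hpsd : ∀ ω, (f ω).PosSemidef) : (matExp μ f).PosSemidef := by
  refine .of_dotProduct_mulVec_nonneg ?_ fun x => ?_
  · rw [IsHermitian, conjTranspose_eq_transpose_of_trivial, matExp_transpose]
    exact congrArg (matExp μ) (funext fun ω => (hpsd ω).isHermitian)
  · rw [star_trivial, ← integral_dotProduct_mulVec_eq_matExp hf]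
    exact integral_nonneg fun ω => (hpsd ω).dotProduct_mulVec_nonneg x

theorem posSemidef_matExp_mul_transpose {m : Type*} [Fintype m] {X : Ω → Matrix n m ℝ}
    (hX : ∀ i j, Integrable (fun ω => (X ω * (X ω)ᵀ) i j) μ) :
    (matExp μ fun ω => X ω * (X ω)ᵀ).PosSemidef :=
  posSemidef_matExp hX fun ω => by
    simpa only [conjTranspose_eq_transpose_of_trivial] using posSemidef_self_mul_conjTranspose (X ω)

end MatExp

theorem random_matrix_cauchy_schwarz_general
    {Ω : Type*} [MeasurableSpace Ω] (μ : Measure Ω)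
    {d M : ℕ}
    (P Q : Ω → Matrix (Fin d) (Fin M) ℝ)
    (hPP : ∀ i j, Integrable (fun ω => (P ω * (P ω)ᵀ) i j) μ)
    (hPQ : ∀ i j, Integrable (fun ω => (P ω * (Q ω)ᵀ) i j) μ)
    (hQQ : ∀ i j, Integrable (fun ω => (Q ω * (Q ω)ᵀ) i j) μ)
    (hinv : IsUnit (matExp μ fun ω => Q ω * (Q ω)ᵀ)) :
    ((matExp μ fun ω => P ω * (P ω)ᵀ) -
      (matExp μ fun ω => P ω * (Q ω)ᵀ) * (matExp μ fun ω => Q ω * (Q ω)ᵀ)⁻¹ *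
        (matExp μ fun ω => Q ω * (P ω)ᵀ)).PosSemidef := by
  have hQP : ∀ i j, Integrable (fun ω => (Q ω * (P ω)ᵀ) i j) μ := fun i j => by
    have hswap : ∀ ω, (Q ω * (P ω)ᵀ) i j = (P ω * (Q ω)ᵀ) j i := fun ω => by
      rw [← transpose_apply (P ω * _), transpose_mul, transpose_transpose]
    simpa only [hswap] using hPQ j i
  have hS : (matExp μ fun ω => Q ω * (Q ω)ᵀ).PosDef :=
    (posSemidef_matExp_mul_transpose hQQ).posDef_iff_isUnit.mpr hinv
  have := hS.isUnit.invertible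
  have hstack : ∀ ω, fromRows (P ω) (Q ω) * (fromRows (P ω) (Q ω))ᵀ =
      fromBlocks (P ω * (P ω)ᵀ) (P ω * (Q ω)ᵀ) (Q ω * (P ω)ᵀ) (Q ω * (Q ω)ᵀ) := fun ω => by
    rw [transpose_fromRows, fromRows_mul_fromCols]
  have hblock := posSemidef_matExp_mul_transpose (X := fun ω => fromRows (P ω) (Q ω)) <| by
    simp only [hstack]
    rintro (i | i) (j | j)
    exacts [hPP i j, hPQ i j, hQP i j, hQQ i j]
  have hPQ_conjTranspose : (matExp μ fun ω => P ω * (Q ω)ᵀ)ᴴ = matExp μ fun ω => Q ω * (P ω)ᵀ := by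
    simp only [conjTranspose_eq_transpose_of_trivial, matExp_transpose, transpose_mul,
      transpose_transpose]
  simp only [hstack, matExp_fromBlocks, ← hPQ_conjTranspose] at hblock
  rw [← hPQ_conjTranspose]
  exact (PosDef.fromBlocks₂₂ _ _ hS).mp hblock

/-- Matrix Cauchy–Schwarz inequality for random matrices:
`E[PQᵀ] (E[QQᵀ])⁻¹ E[QPᵀ] ⪯ E[PPᵀ]` in the Loewner order. -/
theorem random_matrix_cauchy_schwarz
    {Ω : Type*} [MeasurableSpace Ω] (μ : Measure Ω) [IsProbabilityMeasure μ]
    {d M : ℕ}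
    (P Q : Ω → Matrix (Fin d) (Fin M) ℝ)
    (hPP : ∀ i j, Integrable (fun ω => (P ω * (P ω)ᵀ) i j) μ)
    (hPQ : ∀ i j, Integrable (fun ω => (P ω * (Q ω)ᵀ) i j) μ)
    (hQQ : ∀ i j, Integrable (fun ω => (Q ω * (Q ω)ᵀ) i j) μ)
    (hinv : IsUnit (matExp μ fun ω => Q ω * (Q ω)ᵀ)) :
    ((matExp μ fun ω => P ω * (P ω)ᵀ) -
      (matExp μ fun ω => P ω * (Q ω)ᵀ) * (matExp μ fun ω => Q ω * (Q ω)ᵀ)⁻¹ *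
        (matExp μ fun ω => Q ω * (P ω)ᵀ)).PosSemidef :=
  random_matrix_cauchy_schwarz_general μ P Q hPP hPQ hQQ hinv
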